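/- Let k and ℓ be integers with 3 ≤ k ≤ ℓ and let G_{k,ℓ} be the graph described in the context. Then for every choice of vertices x_i ∈ {t_{i,1}, t_{i,2}} for i = k,…,k+ℓ−2, the set {v, x_k,…,x_{k+ℓ−2}} is a total dominating set of G_{k,ℓ} of cardinality ℓ. -/

import Mathlib

/-- Vertices of `G_{k,ℓ}`: triangle vertices `t_{i,j}` as `Sum.inl (i,j)`
(0-indexed, `i : Fin (k+ℓ-2)`, `j : Fin 3`), and `u = Sum.inr false`,
`v = Sum.inr true`. -/
abbrev GklV (k l : ℕ) := (Fin (k + l - 2) × Fin 3) ⊕ Bool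

/-- Edge relation of `G_{k,ℓ}`: triangles on each `t_{i,·}`; `u` adjacent to
`t_{i,1}` for `i ≤ k-1` (0-indexed `i.val < k-1`, `j = 0`) and to all `t_{i,j}`
for `i ≥ k` (0-indexed `k-1 ≤ i.val`); `v` adjacent to all `t_{i,j}` for
`i ≤ k-1` and to `t_{i,1}`, `t_{i,2}` for `i ≥ k`; `u` and `v` nonadjacent. -/
def GklRel (k l : ℕ) : GklV k l → GklV k l → Prop
  | .inl p, .inl q => p.1 = q.1
  | .inr false, .inl p => (p.1.val < k - 1 ∧ p.2.val = 0) ∨ k - 1 ≤ p.1.val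
  | .inr true, .inl p =>
      p.1.val < k - 1 ∨ (k - 1 ≤ p.1.val ∧ (p.2.val = 0 ∨ p.2.val = 1))
  | _, _ => False

/-- The graph `G_{k,ℓ}`. -/
def Gkl (k l : ℕ) : SimpleGraph (GklV k l) := SimpleGraph.fromRel (GklRel k l)

/-- `D` is a total dominating set of `G`. -/
def IsTotalDomSet {V : Type*} (G : SimpleGraph V) (D : Finset V) : Prop :=
  ∀ v : V, ∃ d ∈ D, G.Adj v d

open Finset

theorem Fin.card_filter_le_val (n m : ℕ) : #{i : Fin n | m ≤ i.val} = n - m := by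
  simp_rw [← not_lt]
  rw [filter_not, card_sdiff_of_subset (filter_subset _ _), Fin.card_filter_val_lt, card_univ,
    Fintype.card_fin]
  omega

namespace Gkl

variable {k l : ℕ}

theorem adj_of_ne {i : Fin (k + l - 2)} {j j' : Fin 3} (h : j ≠ j') :
    (Gkl k l).Adj (.inl (i, j)) (.inl (i, j')) := by
  rw [Gkl, SimpleGraph.fromRel_adj]
  exact ⟨by simpa using h, Or.inl rfl⟩

theorem adj_u_of_le {i : Fin (k + l - 2)} (hi : k - 1 ≤ i.val) (j : Fin 3) :
    (Gkl k l).Adj (.inr false) (.inl (i, j)) := by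
  rw [Gkl, SimpleGraph.fromRel_adj]
  exact ⟨by simp, Or.inl (Or.inr hi)⟩

theorem adj_v_of_lt {i : Fin (k + l - 2)} (hi : i.val < k - 1) (j : Fin 3) :
    (Gkl k l).Adj (.inr true) (.inl (i, j)) := by
  rw [Gkl, SimpleGraph.fromRel_adj]
  exact ⟨by simp, Or.inl (Or.inl hi)⟩

theorem adj_v_of_le {i : Fin (k + l - 2)} (hi : k - 1 ≤ i.val) {j : Fin 3}
    (hj : j.val = 0 ∨ j.val = 1) : (Gkl k l).Adj (.inr true) (.inl (i, j)) := by
  rw [Gkl, SimpleGraph.fromRel_adj]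
  exact ⟨by simp, Or.inl (Or.inr ⟨hi, hj⟩)⟩

/-- The set `{v, x_k, …, x_{k+ℓ-2}}` with `x_i = t_{i, c i}`. -/
def choiceSet (k l : ℕ) (c : Fin (k + l - 2) → Fin 3) : Finset (GklV k l) :=
  insert (Sum.inr true)
    (image (fun i => Sum.inl (i, c i)) (univ.filter (fun i : Fin (k + l - 2) => k - 1 ≤ i.val)))

variable {c : Fin (k + l - 2) → Fin 3}

theorem inl_mem_choiceSet {i : Fin (k + l - 2)} (hi : k - 1 ≤ i.val) :
    .inl (i, c i) ∈ choiceSet k l c :=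
  mem_insert_of_mem (mem_image_of_mem _ (mem_filter.2 ⟨mem_univ i, hi⟩))

theorem isTotalDomSet_choiceSet (hkl : k - 1 < k + l - 2)
    (hc : ∀ i, k - 1 ≤ i.val → (c i).val = 0 ∨ (c i).val = 1) :
    IsTotalDomSet (Gkl k l) (choiceSet k l c) := by
  have hv : (.inr true : GklV k l) ∈ choiceSet k l c := mem_insert_self _ _
  rintro (⟨i, j⟩ | b)
  · by_cases hi : k - 1 ≤ i.val
    · by_cases hj : j = c i
      · subst hj
        exact ⟨_, hv, (adj_v_of_le hi (hc i hi)).symm⟩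
      · exact ⟨_, inl_mem_choiceSet hi, adj_of_ne hj⟩
    · exact ⟨_, hv, (adj_v_of_lt (not_le.1 hi) j).symm⟩
  · -- both `u` and `v` see the first chosen vertex `x_k`
    let i₀ : Fin (k + l - 2) := ⟨k - 1, hkl⟩
    refine ⟨_, inl_mem_choiceSet (i := i₀) le_rfl, ?_⟩
    cases b
    · exact adj_u_of_le le_rfl _
    · exact adj_v_of_le le_rfl (hc i₀ le_rfl)

theorem card_choiceSet (hk : 1 ≤ k) (hl : 2 ≤ l) : #(choiceSet k l c) = l := by
  have hinj : Function.Injective (fun i : Fin (k + l - 2) => (Sum.inl (i, c i) : GklV k l)) :=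
    fun a b h => congrArg Prod.fst (Sum.inl_injective h)
  rw [choiceSet, card_insert_of_notMem (by simp), card_image_of_injective _ hinj,
    Fin.card_filter_le_val]
  omega

end Gkl

/-- For every choice `x_i ∈ {t_{i,1}, t_{i,2}}` for `i = k, …, k+ℓ-2`
(0-indexed `k-1 ≤ i.val`), the set `{v, x_k, …, x_{k+ℓ-2}}` is a total
dominating set of `G_{k,ℓ}` of cardinality `ℓ`. -/
theorem stmt10 (k l : ℕ) (hk : 3 ≤ k) (hkl : k ≤ l)
    (c : Fin (k + l - 2) → Fin 3)
    (hc : ∀ i, k - 1 ≤ i.val → (c i).val = 0 ∨ (c i).val = 1)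
    (D : Finset (GklV k l))
    (hDdef : D = insert (Sum.inr true)
      (Finset.image (fun i => Sum.inl (i, c i))
        (Finset.univ.filter (fun i : Fin (k + l - 2) => k - 1 ≤ i.val)))) :
    IsTotalDomSet (Gkl k l) D ∧ D.card = l := by
  subst hDdef
  exact ⟨Gkl.isTotalDomSet_choiceSet (by omega) hc, Gkl.card_choiceSet (by omega) (by omega)⟩
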